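/- Let R be a commutative ring, u ≥ 0, 0 ≤ k ≤ u, and B = R[z₁,...,z_u]/(z₁²,...,z_u²) graded with each z_i in degree −2, a Γ_R(y)-module via y^{[m]} ↦ Σ_{|S|=m} z_S. Then every monomial z_T with |T| ≥ (u+k)/2 lies in the Γ_R(y)-submodule generated by the monomials z_S with |S| ≤ (u−k)/2. -/

import Mathlib

/-! Inclusion–exclusion. For any family of square-zero elements, `y^{[m]} z_S` is the sum of the
`z_Q` with `S ⊆ Q` and `|Q| = m + |S|`. Hence, when `|Tᶜ| ≤ |T|`,
`Σ_{S ⊆ Tᶜ} (-1)^|S| y^{[|T|-|S|]} z_S = Σ_{|Q| = |T|} (Σ_{S ⊆ Q \ T} (-1)^|S|) z_Q = z_T`,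
and every `S ⊆ Tᶜ` satisfies `2|S| ≤ 2(u - |T|) ≤ u - k`. -/

open Finset

noncomputable section

/-- `B R u = R[z₁,…,z_u]/(z₁²,…,z_u²)`. -/
abbrev SqZeroAlg (R : Type*) [CommRing R] (u : ℕ) : Type _ :=
  MvPolynomial (Fin u) R ⧸
    Ideal.span (Set.range fun i : Fin u => (MvPolynomial.X i : MvPolynomial (Fin u) R) ^ 2)

def zvar (R : Type*) [CommRing R] (u : ℕ) (i : Fin u) : SqZeroAlg R u :=
  Ideal.Quotient.mk _ (MvPolynomial.X i)

def zmon (R : Type*) [CommRing R] (u : ℕ) (S : Finset (Fin u)) : SqZeroAlg R u :=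
  ∏ i ∈ S, zvar R u i

/-- `y^{[m]} = Σ_{|S|=m} z_S`. -/
def ysym (R : Type*) [CommRing R] (u : ℕ) (m : ℕ) : SqZeroAlg R u :=
  ∑ S ∈ Finset.powersetCard m (Finset.univ : Finset (Fin u)), zmon R u S

section SquareZero

variable {A ι : Type*} [CommRing A] [DecidableEq ι] {z : ι → A}

theorem prod_mul_prod_eq_zero_of_not_disjoint (hz : ∀ i, z i ^ 2 = 0) {P S : Finset ι}
    (h : ¬Disjoint P S) : (∏ i ∈ P, z i) * ∏ i ∈ S, z i = 0 := by
  obtain ⟨i, hiP, hiS⟩ := not_disjoint_iff.mp h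
  rw [← mul_prod_erase _ _ hiP, ← mul_prod_erase _ _ hiS]
  linear_combination (∏ j ∈ P.erase i, z j) * (∏ j ∈ S.erase i, z j) * hz i

variable [Fintype ι]

theorem sum_powersetCard_prod_mul_prod (hz : ∀ i, z i ^ 2 = 0) (m : ℕ) (S : Finset ι) :
    (∑ P ∈ powersetCard m univ, ∏ i ∈ P, z i) * ∏ i ∈ S, z i =
      ∑ Q ∈ powersetCard (m + #S) univ with S ⊆ Q, ∏ i ∈ Q, z i := by
  rw [sum_mul, ← sum_filter_add_sum_filter_not _ (Disjoint · S),
    sum_eq_zero fun P hP => prod_mul_prod_eq_zero_of_not_disjoint hz (mem_filter.mp hP).2,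
    add_zero]
  refine sum_nbij' (· ∪ S) (· \ S) ?_ ?_ ?_ ?_ ?_ <;> simp only [mem_filter, mem_powersetCard_univ]
  · rintro P ⟨hcard, hdisj⟩
    exact ⟨by rw [card_union_of_disjoint hdisj, hcard], subset_union_right⟩
  · rintro Q ⟨hcard, hsub⟩
    exact ⟨by rw [card_sdiff_of_subset hsub, hcard, Nat.add_sub_cancel], sdiff_disjoint⟩
  · rintro P ⟨-, hdisj⟩
    exact union_sdiff_cancel_right hdisj
  · rintro Q ⟨-, hsub⟩
    exact sdiff_union_of_subset hsub
  · rintro P ⟨-, hdisj⟩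
    exact (prod_union hdisj).symm

theorem prod_eq_alternating_sum_powerset_compl (hz : ∀ i, z i ^ 2 = 0) {T : Finset ι}
    (hT : #Tᶜ ≤ #T) :
    ∏ i ∈ T, z i = ∑ S ∈ Tᶜ.powerset, (-1 : ℤ) ^ #S •
      ((∑ P ∈ powersetCard (#T - #S) univ, ∏ i ∈ P, z i) * ∏ i ∈ S, z i) := by
  have hcard : ∀ S ∈ Tᶜ.powerset, #T - #S + #S = #T := fun S hS => by
    have := card_le_card (mem_powerset.mp hS)
    omega
  symm
  calc _ = ∑ S ∈ Tᶜ.powerset, ∑ Q ∈ powersetCard #T univ with S ⊆ Q,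
          (-1 : ℤ) ^ #S • ∏ i ∈ Q, z i :=
        sum_congr rfl fun S hS => by rw [sum_powersetCard_prod_mul_prod hz, hcard S hS, smul_sum]
    _ = ∑ Q ∈ powersetCard #T univ, ∑ S ∈ (Q \ T).powerset, (-1 : ℤ) ^ #S • ∏ i ∈ Q, z i := by
        refine sum_comm' fun S Q => ?_
        simp only [mem_powerset, mem_filter, subset_sdiff, subset_compl_iff_disjoint_right]
        tauto
    _ = ∑ Q ∈ powersetCard #T univ, if Q = T then ∏ i ∈ Q, z i else 0 := by
        refine sum_congr rfl fun Q hQ => ?_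
        have hQT : Q ⊆ T ↔ Q = T :=
          ⟨fun h => eq_of_subset_of_card_le h (mem_powersetCard_univ.mp hQ).ge, le_of_eq⟩
        simp only [← sum_smul, sum_powerset_neg_one_pow_card, sdiff_eq_empty_iff_subset, hQT]
        split_ifs <;> simp
    _ = ∏ i ∈ T, z i := by simp

end SquareZero

theorem zvar_sq (R : Type*) [CommRing R] (u : ℕ) (i : Fin u) : zvar R u i ^ 2 = 0 := by
  rw [zvar, ← map_pow, Ideal.Quotient.eq_zero_iff_mem]
  exact Ideal.subset_span ⟨i, rfl⟩

theorem statement9_general (R : Type*) [CommRing R] (u k : ℕ)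
    (T : Finset (Fin u)) (hT : u + k ≤ 2 * T.card) :
    zmon R u T ∈
      Submodule.span R
        {x : SqZeroAlg R u | ∃ (m : ℕ) (S : Finset (Fin u)),
          2 * S.card ≤ u - k ∧ x = ysym R u m * zmon R u S} := by
  have hTc : #Tᶜ ≤ #T := by
    rw [card_compl, Fintype.card_fin]
    omega
  rw [zmon, prod_eq_alternating_sum_powerset_compl (zvar_sq R u) hTc]
  refine Submodule.sum_mem _ fun S hS => Submodule.smul_of_tower_mem _ _ ?_
  refine Submodule.subset_span ⟨#T - #S, S, ?_, rfl⟩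
  have := card_le_card (mem_powerset.mp hS)
  rw [card_compl, Fintype.card_fin] at this
  omega

/-- **Hard Lefschetz for `B R u`.**  With each `z_i` in degree `−2` (so `z_S` has degree
`−2|S|`), every monomial `z_T` of degree at most `−(u+k)` (i.e. `|T| ≥ (u+k)/2`) lies in
the `Γ_R(y)`-submodule generated by the monomials `z_S` of degree at least `−(u−k)`
(i.e. `2|S| ≤ u−k`). -/
theorem statement9 (R : Type*) [CommRing R] (u k : ℕ) (hk : k ≤ u)
    (T : Finset (Fin u)) (hT : u + k ≤ 2 * T.card) :
    zmon R u T ∈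
      Submodule.span R
        {x : SqZeroAlg R u | ∃ (m : ℕ) (S : Finset (Fin u)),
          2 * S.card ≤ u - k ∧ x = ysym R u m * zmon R u S} :=
  statement9_general R u k T hT

end
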